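/- arXiv:1009.2523 — 3 statements merged into one kernel-verified Lean document; each statement's English description precedes it below -/
import Mathlib

section
/- Let A ⊆ ℝ² be a nonempty compact convex set and let x be an extreme point of A. For every ε > 0 there exists δ > 0 such that for every nonempty compact convex set A' ⊆ ℝ² with Hausdorff distance d_H(A, A') < δ, there exists an extreme point x' of A' with ‖x − x'‖₁ < ε. -/
/-- The ℓ¹-norm on ℝ². -/
def norm1 (x : ℝ × ℝ) : ℝ := |x.1| + |x.2|

/-- The closed `r`-neighborhood of a set in the ℓ¹-metric on ℝ². -/
def nbhd1 (S : Set (ℝ × ℝ)) (r : ℝ) : Set (ℝ × ℝ) := {x | ∃ y ∈ S, norm1 (x - y) ≤ r}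

/-- The Hausdorff distance in the ℓ¹-metric:
`d_H(A,B) = inf {ε > 0 : A ⊆ B^(ε) and B ⊆ A^(ε)}`. -/
noncomputable def hdist1 (A B : Set (ℝ × ℝ)) : ℝ :=
  sInf {ε : ℝ | 0 < ε ∧ A ⊆ nbhd1 B ε ∧ B ⊆ nbhd1 A ε}

/-! In finite dimensions an extreme point `x` of a compact convex set `A` is a denting point: by
Carathéodory the convex hull of `A \ ball x r` is compact, it misses `x`, so Hahn–Banach gives a
functional `f` whose slice `{z ∈ A | f x - c < f z}` lies in `ball x r`. If `A'` is Hausdorff-close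
to `A`, the face of `A'` on which `f` is maximal contains an extreme point `x'` of `A'`
(Krein–Milman); `f x'` is nearly as large as `f x`, so a point of `A` near `x'` lies in the slice,
and hence `x'` is near `x`. -/

open Set Function Metric Module

theorem isCompact_convexHull {E : Type*} [AddCommGroup E] [Module ℝ E] [TopologicalSpace E]
    [ContinuousAdd E] [ContinuousSMul ℝ E] [FiniteDimensional ℝ E] {s : Set E}
    (hs : IsCompact s) : IsCompact (convexHull ℝ s) := by
  rcases s.eq_empty_or_nonempty with rfl | ⟨p₀, hp₀⟩
  · simp
  -- Carathéodory: a point of the hull is a convex combination of `finrank ℝ E + 1` points of `s`.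
  set n := finrank ℝ E + 1
  suffices convexHull ℝ s = (fun q : (Fin n → ℝ) × (Fin n → E) ↦ ∑ i, q.1 i • q.2 i) ''
      (stdSimplex ℝ (Fin n) ×ˢ univ.pi fun _ ↦ s) by
    rw [this]
    exact ((isCompact_stdSimplex ℝ _).prod (isCompact_univ_pi fun _ ↦ hs)).image (by fun_prop)
  refine Subset.antisymm (fun x hx ↦ ?_) ?_
  · obtain ⟨ι, _, z, w, hzs, hz, hw0, hw1, rfl⟩ := eq_pos_convex_span_of_mem_convexHull hx
    have hcard : Fintype.card ι ≤ Fintype.card (Fin n) := by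
      simpa [n] using hz.card_le_finrank_succ.trans (by gcongr; exact Submodule.finrank_le _)
    obtain ⟨e⟩ := Function.Embedding.nonempty_of_card_le hcard
    refine ⟨(extend e w 0, extend e z fun _ ↦ p₀), ⟨⟨fun j ↦ ?_, ?_⟩, fun j _ ↦ ?_⟩, ?_⟩
    · by_cases hj : j ∈ range e
      · obtain ⟨i, rfl⟩ := hj
        simpa [e.injective.extend_apply] using (hw0 i).le
      · simp [extend_apply' (f := e) _ _ _ hj]
    · rw [← hw1]
      exact (Fintype.sum_of_injective e e.injective w (extend e w 0)
        (fun j hj ↦ extend_apply' _ _ _ hj) fun i ↦ (e.injective.extend_apply _ _ _).symm).symm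
    · by_cases hj : j ∈ range e
      · obtain ⟨i, rfl⟩ := hj
        simpa [e.injective.extend_apply] using hzs (mem_range_self i)
      · simpa [extend_apply' (f := e) _ _ _ hj] using hp₀
    · refine (Fintype.sum_of_injective e e.injective _ _ (fun j hj ↦ ?_) fun i ↦ ?_).symm
      · simp [extend_apply' (f := e) _ _ _ hj]
      · simp [e.injective.extend_apply]
  · rintro _ ⟨⟨w, p⟩, ⟨hw, hp⟩, rfl⟩
    exact (convex_convexHull ℝ s).sum_mem (fun i _ ↦ hw.1 i) hw.2
      fun i _ ↦ subset_convexHull ℝ s (hp i trivial)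

theorem IsCompact.exists_mem_extremePoints_isMaxOn {E : Type*} [AddCommGroup E] [Module ℝ E]
    [TopologicalSpace E] [T2Space E] [IsTopologicalAddGroup E] [ContinuousSMul ℝ E]
    [LocallyConvexSpace ℝ E] {s : Set E} (hs : IsCompact s) (hne : s.Nonempty)
    (f : StrongDual ℝ E) : ∃ x ∈ s.extremePoints ℝ, IsMaxOn f s x := by
  obtain ⟨m, hm, hmax⟩ := hs.exists_isMaxOn hne f.continuous.continuousOn
  have hexposed : IsExposed ℝ s {y ∈ s | ∀ z ∈ s, f z ≤ f y} := fun _ ↦ ⟨f, rfl⟩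
  obtain ⟨x, hx⟩ := (hexposed.isCompact hs).extremePoints_nonempty ⟨m, hm, hmax⟩
  exact ⟨x, hexposed.isExtreme.extremePoints_subset_extremePoints hx, hx.1.2⟩

lemma StrongDual.sub_lt_of_dist_lt {E : Type*} [SeminormedAddCommGroup E] [NormedSpace ℝ E]
    (f : StrongDual ℝ E) {a b : E} {δ : ℝ} (h : dist a b < δ) : f a - f b < (‖f‖ + 1) * δ :=
  calc f a - f b ≤ ‖f‖ * dist a b := by
        rw [dist_eq_norm, ← map_sub]; exact (le_abs_self _).trans (f.le_opNorm _)
    _ < (‖f‖ + 1) * δ := by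
        nlinarith [norm_nonneg f, dist_nonneg (x := a) (y := b)]

section NormedSpace

variable {E : Type*} [NormedAddCommGroup E] [NormedSpace ℝ E] [FiniteDimensional ℝ E]
  {A : Set E} {x : E}

theorem exists_slice_subset_ball_of_mem_extremePoints (hAcp : IsCompact A) (hAcv : Convex ℝ A)
    (hx : x ∈ A.extremePoints ℝ) {r : ℝ} (hr : 0 < r) :
    ∃ (f : StrongDual ℝ E) (c : ℝ), 0 < c ∧ ∀ z ∈ A, f x - c < f z → z ∈ ball x r := by
  set K := convexHull ℝ (A \ ball x r)
  have hxK : x ∉ K := fun hxK ↦ (hAcv.mem_extremePoints_iff_mem_sdiff_convexHull_sdiff.mp hx).2 <|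
    convexHull_mono (sdiff_subset_sdiff_right (singleton_subset_iff.mpr (mem_ball_self hr))) hxK
  obtain ⟨f, u, hfK, hux⟩ := geometric_hahn_banach_closed_point (convex_convexHull ℝ _)
    (isCompact_convexHull (hAcp.diff isOpen_ball)).isClosed hxK
  refine ⟨f, f x - u, sub_pos.mpr hux, fun z hz hfz ↦ ?_⟩
  by_contra hzr
  exact (hfK z (subset_convexHull ℝ _ ⟨hz, hzr⟩)).not_gt (by linarith)

theorem exists_mem_extremePoints_dist_lt_of_subset_thickening (hAcp : IsCompact A)
    (hAcv : Convex ℝ A) (hx : x ∈ A.extremePoints ℝ) {ε : ℝ} (hε : 0 < ε) :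
    ∃ δ > 0, ∀ A' : Set E, IsCompact A' → A ⊆ thickening δ A' → A' ⊆ thickening δ A →
      ∃ x' ∈ A'.extremePoints ℝ, dist x x' < ε := by
  obtain ⟨f, c, hc, hslice⟩ :=
    exists_slice_subset_ball_of_mem_extremePoints hAcp hAcv hx (half_pos hε)
  set δ := min (ε / 2) (c / (2 * (‖f‖ + 1)))
  have hδc : (‖f‖ + 1) * δ ≤ c / 2 := by
    have := min_le_right (ε / 2) (c / (2 * (‖f‖ + 1)))
    rw [le_div_iff₀ (by positivity)] at this
    linarith
  refine ⟨δ, by positivity, fun A' hA'cp hAA' hA'A ↦ ?_⟩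
  obtain ⟨x₀, hx₀, hxx₀⟩ := mem_thickening_iff.mp (hAA' hx.1)
  obtain ⟨x', hx', hmax⟩ := hA'cp.exists_mem_extremePoints_isMaxOn ⟨x₀, hx₀⟩ f
  obtain ⟨z, hz, hx'z⟩ := mem_thickening_iff.mp (hA'A hx'.1)
  have hfz : f x - c < f z := by
    linarith [f.sub_lt_of_dist_lt hxx₀, f.sub_lt_of_dist_lt hx'z,
      show f x₀ ≤ f x' from hmax hx₀]
  refine ⟨x', hx', ?_⟩
  calc dist x x' ≤ dist z x + dist z x' := dist_triangle_left _ _ _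
    _ < ε / 2 + δ := add_lt_add (hslice z hz hfz) (by rwa [dist_comm])
    _ ≤ ε := by linarith [min_le_left (ε / 2) (c / (2 * (‖f‖ + 1)))]

end NormedSpace

lemma norm_le_norm1 (p : ℝ × ℝ) : ‖p‖ ≤ norm1 p :=
  max_le (le_add_of_nonneg_right (abs_nonneg _)) (le_add_of_nonneg_left (abs_nonneg _))

lemma norm1_le_two_mul_norm (p : ℝ × ℝ) : norm1 p ≤ 2 * ‖p‖ := by
  have h₁ : |p.1| ≤ ‖p‖ := norm_fst_le p
  have h₂ : |p.2| ≤ ‖p‖ := norm_snd_le p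
  rw [norm1]
  linarith

lemma nbhd1_subset_thickening {S : Set (ℝ × ℝ)} {d δ : ℝ} (hd : d < δ) :
    nbhd1 S d ⊆ thickening δ S := fun x ⟨y, hy, hxy⟩ ↦
  mem_thickening_iff.mpr ⟨y, hy, by rw [dist_eq_norm]; linarith [norm_le_norm1 (x - y)]⟩

-- Boundedness matters: for an empty defining set, `hdist1 A B = sInf ∅ = 0`.
lemma exists_subset_nbhd1_of_isBounded {A B : Set (ℝ × ℝ)} (hAB : Bornology.IsBounded (A ∪ B))
    (hA : A.Nonempty) (hB : B.Nonempty) : ∃ r > 0, A ⊆ nbhd1 B r ∧ B ⊆ nbhd1 A r := by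
  obtain ⟨C, hC⟩ := isBounded_iff.mp hAB
  have h {P Q : Set (ℝ × ℝ)} (hP : P ⊆ A ∪ B) (hQ : Q ⊆ A ∪ B) (hQne : Q.Nonempty) :
      P ⊆ nbhd1 Q (2 * |C| + 1) := fun a ha ↦ by
    obtain ⟨b, hb⟩ := hQne
    refine ⟨b, hb, ?_⟩
    have := hC (hP ha) (hQ hb)
    rw [dist_eq_norm] at this
    linarith [norm1_le_two_mul_norm (a - b), le_abs_self C]
  exact ⟨2 * |C| + 1, by positivity, h subset_union_left subset_union_right hB,
    h subset_union_right subset_union_left hA⟩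

lemma subset_thickening_of_hdist1_lt {A B : Set (ℝ × ℝ)} (hAB : Bornology.IsBounded (A ∪ B))
    (hA : A.Nonempty) (hB : B.Nonempty) {δ : ℝ} (h : hdist1 A B < δ) :
    A ⊆ thickening δ B ∧ B ⊆ thickening δ A := by
  obtain ⟨r, hr, hAr, hBr⟩ := exists_subset_nbhd1_of_isBounded hAB hA hB
  obtain ⟨d, ⟨-, hAd, hBd⟩, hdδ⟩ :=
    exists_lt_of_csInf_lt (s := {ε | 0 < ε ∧ A ⊆ nbhd1 B ε ∧ B ⊆ nbhd1 A ε}) ⟨r, hr, hAr, hBr⟩ h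
  exact ⟨hAd.trans (nbhd1_subset_thickening hdδ), hBd.trans (nbhd1_subset_thickening hdδ)⟩

theorem extreme_points_semicontinuous_general
    (A : Set (ℝ × ℝ)) (hAcp : IsCompact A) (hAcv : Convex ℝ A)
    (x : ℝ × ℝ) (hx : x ∈ A.extremePoints ℝ) (ε : ℝ) (hε : 0 < ε) :
    ∃ δ : ℝ, 0 < δ ∧
      ∀ A' : Set (ℝ × ℝ), A'.Nonempty → IsCompact A' → Convex ℝ A' → hdist1 A A' < δ →
        ∃ x' ∈ A'.extremePoints ℝ, norm1 (x - x') < ε := by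
  obtain ⟨δ, hδ, hstable⟩ :=
    exists_mem_extremePoints_dist_lt_of_subset_thickening hAcp hAcv hx (half_pos hε)
  refine ⟨δ, hδ, fun A' hA'ne hA'cp _ hdist ↦ ?_⟩
  obtain ⟨hAA', hA'A⟩ := subset_thickening_of_hdist1_lt (hAcp.union hA'cp).isBounded
    ⟨x, hx.1⟩ hA'ne hdist
  obtain ⟨x', hx', hxx'⟩ := hstable A' hA'cp hAA' hA'A
  rw [dist_eq_norm] at hxx'
  exact ⟨x', hx', by linarith [norm1_le_two_mul_norm (x - x')]⟩

/-- Extreme points of compact convex sets in the plane are lower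
semi-continuous with respect to the Hausdorff metric: if `x` is an extreme point of a
nonempty compact convex `A ⊆ ℝ²` and `ε > 0`, then any nonempty compact convex `A'`
sufficiently Hausdorff-close to `A` has an extreme point within ℓ¹-distance `ε` of `x`. -/
theorem extreme_points_semicontinuous
    (A : Set (ℝ × ℝ)) (hAne : A.Nonempty) (hAcp : IsCompact A) (hAcv : Convex ℝ A)
    (x : ℝ × ℝ) (hx : x ∈ A.extremePoints ℝ) (ε : ℝ) (hε : 0 < ε) :
    ∃ δ : ℝ, 0 < δ ∧
      ∀ A' : Set (ℝ × ℝ), A'.Nonempty → IsCompact A' → Convex ℝ A' → hdist1 A A' < δ →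
        ∃ x' ∈ A'.extremePoints ℝ, norm1 (x - x') < ε :=
  extreme_points_semicontinuous_general A hAcp hAcv x hx ε hε
end

section
/- Let μ ∈ ℳ and let Q ⊆ (0,∞) be a Borel set with μ({q}) = 0 for all q ∈ Q. Then ℙ-almost surely the following holds: for every pair of vertices x, y ∈ ℤ², any two geodesics from x to y contain exactly the same set of edges whose passage time lies in Q. -/
open MeasureTheory
open scoped Pointwise

/-- Sites of the lattice ℤ². -/
abbrev Site := ℤ × ℤ

/-- An edge of ℤ² is encoded by its lower-left endpoint together with a direction:
`true` for the horizontal edge to `(p.1+1, p.2)`, `false` for the vertical edge to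
`(p.1, p.2+1)`. This parametrizes the nearest-neighbor edge set 𝔼 bijectively. -/
abbrev Edge := Site × Bool

/-- The two endpoints of an edge. -/
def edgeEnds (e : Edge) : Site × Site :=
  (e.1, if e.2 then (e.1.1 + 1, e.1.2) else (e.1.1, e.1.2 + 1))

/-- Nearest-neighbor adjacency in ℤ². -/
def SiteAdj (u v : Site) : Prop := |u.1 - v.1| + |u.2 - v.2| = 1

/-- The edge joining two adjacent sites (junk value if the sites are not adjacent). -/
def siteEdge (u v : Site) : Edge :=
  if v.1 = u.1 + 1 ∧ v.2 = u.2 then (u, true)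
  else if u.1 = v.1 + 1 ∧ u.2 = v.2 then (v, true)
  else if v.2 = u.2 + 1 ∧ v.1 = u.1 then (u, false)
  else (v, false)

/-- A (finite) path from `x` to `y`: a nonempty list of pairwise-adjacent sites
starting at `x` and ending at `y`. -/
def IsPath (x y : Site) (p : List Site) : Prop :=
  p.Chain' SiteAdj ∧ p.head? = some x ∧ p.getLast? = some y

/-- The list of edges traversed by a path (given as a list of sites). -/
def pathEdges (p : List Site) : List Edge :=
  (p.zip p.tail).map fun uv => siteEdge uv.1 uv.2

/-- The passage time of a path in the configuration `ω`. -/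
def pathTime (ω : Edge → ℝ) (p : List Site) : ℝ :=
  ((pathEdges p).map ω).sum

/-- The passage time `τ(x,y)` from `x` to `y`: the infimum of passage times of paths
joining `x` to `y`. -/
noncomputable def T (ω : Edge → ℝ) (x y : Site) : ℝ :=
  sInf {t | ∃ p : List Site, IsPath x y p ∧ pathTime ω p = t}

/-- `p` is a geodesic from `x` to `y` in the configuration `ω`. -/
def IsGeodesic (ω : Edge → ℝ) (x y : Site) (p : List Site) : Prop :=
  IsPath x y p ∧ pathTime ω p = T ω x y

/-- The family ℳ: Borel probability measures on [0,∞) (modeled as measures on ℝ giving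
zero mass to the negative reals) with finite mean and `μ({0}) < 1/2`, where `1/2` is the
critical probability for bond percolation on ℤ². -/
def MemM (μ : Measure ℝ) : Prop :=
  IsProbabilityMeasure μ ∧ μ (Set.Iio 0) = 0 ∧ Integrable id μ ∧ μ {0} < 1/2

/-- `P` is the joint law `μ^𝔼` of an i.i.d. family of edge weights with marginal `μ`:
a probability measure on configuration space whose finite-dimensional cylinder
probabilities are the corresponding products. -/
def IsIIDProduct (μ : Measure ℝ) (P : Measure (Edge → ℝ)) : Prop :=
  IsProbabilityMeasure P ∧
    ∀ (s : Finset Edge) (B : Edge → Set ℝ), (∀ e ∈ s, MeasurableSet (B e)) →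
      P {ω | ∀ e ∈ s, ω e ∈ B e} = ∏ e ∈ s, μ (B e)

/-- The canonical embedding of ℤ² in ℝ². -/
def toR2 (v : Site) : ℝ × ℝ := ((v.1 : ℝ), (v.2 : ℝ))

/-- The (fattened) ball of radius `t` around the origin: the union of unit cubes centered
at the lattice points `x` with `τ(0,x) ≤ t`. -/
def fppBall (ω : Edge → ℝ) (t : ℝ) : Set (ℝ × ℝ) :=
  {x | ∃ v : Site, T ω 0 v ≤ t ∧ |x.1 - (v.1 : ℝ)| ≤ 1/2 ∧ |x.2 - (v.2 : ℝ)| ≤ 1/2}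

/-- `B` is the limit shape of first-passage percolation with edge-weight distribution `μ`
(whose i.i.d. joint law is `P`): `B` is compact and convex with nonempty interior, and for
every `δ > 0`, `P`-a.s. `(1-δ)B ⊆ (1/t)B(t) ⊆ (1+δ)B` for all sufficiently large `t`. -/
def IsLimitShape (P : Measure (Edge → ℝ)) (B : Set (ℝ × ℝ)) : Prop :=
  IsCompact B ∧ Convex ℝ B ∧ (interior B).Nonempty ∧
    ∀ δ : ℝ, 0 < δ → ∀ᵐ ω ∂P, ∃ t₀ : ℝ, ∀ t : ℝ, t₀ ≤ t →
      (1 - δ) • B ⊆ (1/t) • fppBall ω t ∧ (1/t) • fppBall ω t ⊆ (1 + δ) • B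

/-- `A` is `ε`-dense in `B` (w.r.t. the ℓ¹-metric). -/
def EpsDense (ε : ℝ) (A B : Set (ℝ × ℝ)) : Prop :=
  ∀ x ∈ B, ∃ y ∈ A, norm1 (x - y) < ε

/-!
If an edge `e` with `τ_e ∈ Q` lies on one of two paths of equal passage time but not on the
other, then equating the two passage times expresses `τ_e` as a measurable function of the
weights of the other edges. These are independent of `τ_e`, whose law has no atoms in `Q`, so
this happens with probability zero; there are only countably many pairs of paths and edges.
-/

open ProbabilityTheory

lemma List.sum_map_sub_sum_map_eq_sum_count_mul {ι R : Type*} [DecidableEq ι] [CommRing R]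
    (L M : List ι) (f : ι → R) :
    (L.map f).sum - (M.map f).sum =
      ∑ i ∈ (L ++ M).toFinset, ((L.count i : R) - M.count i) * f i := by
  have hsum : ∀ N : List ι, N.toFinset ⊆ (L ++ M).toFinset →
      (N.map f).sum = ∑ i ∈ (L ++ M).toFinset, (N.count i : R) * f i := by
    intro N hN
    simp_rw [Finset.sum_list_map_count N f, nsmul_eq_mul]
    exact Finset.sum_subset hN fun i _ hi => by
      rw [List.count_eq_zero_of_not_mem (List.mem_toFinset.not.mp hi), Nat.cast_zero, zero_mul]
  simp only [sub_mul, Finset.sum_sub_distrib]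
  rw [hsum L (by simp), hsum M (by simp)]

section Independence

variable {Ω β ι : Type*} [MeasurableSpace Ω] [MeasurableSpace β] {P : Measure Ω}
  [IsFiniteMeasure P] {Q : Set ℝ}

lemma ProbabilityTheory.IndepFun.measure_eq_comp_inter_null {X : Ω → ℝ} {Y : Ω → β}
    (hXY : IndepFun X Y P) (hX : Measurable X) (hY : Measurable Y) {h : β → ℝ}
    (hh : Measurable h) (hQ : MeasurableSet Q) (hatom : ∀ q ∈ Q, P (X ⁻¹' {q}) = 0) :
    P {ω | X ω = h (Y ω) ∧ X ω ∈ Q} = 0 := by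
  set S : Set (ℝ × β) := {z | z.1 = h z.2 ∧ z.1 ∈ Q}
  have hS : MeasurableSet S :=
    (measurableSet_eq_fun measurable_fst (hh.comp measurable_snd)).inter (measurable_fst hQ)
  have hslice : ∀ y, P.map X ((fun x => (x, y)) ⁻¹' S) = 0 := by
    intro y
    by_cases hy : h y ∈ Q
    · refine measure_mono_null (t := {h y}) (fun x hx => hx.1) ?_
      rw [Measure.map_apply hX (measurableSet_singleton _)]
      exact hatom _ hy
    · exact measure_mono_null (fun x hx => hy (hx.1 ▸ hx.2)) measure_empty
  calc P {ω | X ω = h (Y ω) ∧ X ω ∈ Q} = P.map (fun ω => (X ω, Y ω)) S :=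
        (Measure.map_apply (hX.prodMk hY) hS).symm
    _ = ∫⁻ y, P.map X ((fun x => (x, y)) ⁻¹' S) ∂(P.map Y) := by
        rw [hXY.map_prod_eq_prod_map_map hX.aemeasurable hY.aemeasurable,
          Measure.prod_apply_symm hS]
    _ = 0 := by simp only [hslice, lintegral_zero]

lemma ProbabilityTheory.iIndepFun.measure_sum_mul_eq_zero_inter_null {X : ι → Ω → ℝ}
    (hX : iIndepFun X P) (hXm : ∀ i, Measurable (X i)) {s : Finset ι} {c : ι → ℝ} {i₀ : ι}
    (hi₀ : i₀ ∈ s) (hc : c i₀ ≠ 0) (hQ : MeasurableSet Q)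
    (hatom : ∀ q ∈ Q, P (X i₀ ⁻¹' {q}) = 0) :
    P {ω | ∑ i ∈ s, c i * X i ω = 0 ∧ X i₀ ω ∈ Q} = 0 := by
  classical
  set Z : ι → Ω → ℝ := fun i ω => c i * X i ω
  have hZm : ∀ i, Measurable (Z i) := fun i => (hXm i).const_mul _
  have hZ : iIndepFun Z P := hX.comp (fun i t => c i * t) fun i => measurable_const_mul _
  set Y := ∑ i ∈ s.erase i₀, Z i
  have hXY : IndepFun (X i₀) Y P := by
    have hZX : (· / c i₀) ∘ Z i₀ = X i₀ := by
      ext ω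
      simp [Z, hc]
    simpa only [hZX, Function.id_comp] using
      (hZ.indepFun_finsetSum_of_notMem hZm (s.notMem_erase i₀)).symm.comp
        (measurable_div_const (c i₀)) measurable_id
  have hYm : Measurable Y := by
    simpa only [Y, Finset.sum_fn] using Finset.measurable_sum _ fun i _ => hZm i
  refine measure_mono_null ?_ (hXY.measure_eq_comp_inter_null (hXm i₀) hYm
    ((measurable_neg (G := ℝ)).div_const (c i₀)) hQ hatom)
  rintro ω ⟨hsum, hQω⟩
  refine ⟨?_, hQω⟩
  rw [← Finset.add_sum_erase s _ hi₀] at hsum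
  simp only [Y, Z, Finset.sum_apply]
  field_simp
  linarith

lemma ProbabilityTheory.iIndepFun.measure_sum_map_eq_inter_null [DecidableEq ι]
    {X : ι → Ω → ℝ} (hX : iIndepFun X P) (hXm : ∀ i, Measurable (X i)) {L M : List ι}
    {i₀ : ι} (hL : i₀ ∈ L) (hM : i₀ ∉ M) (hQ : MeasurableSet Q)
    (hatom : ∀ q ∈ Q, P (X i₀ ⁻¹' {q}) = 0) :
    P {ω | (L.map (X · ω)).sum = (M.map (X · ω)).sum ∧ X i₀ ω ∈ Q} = 0 := by
  have hc : (L.count i₀ : ℝ) - M.count i₀ ≠ 0 := by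
    rw [List.count_eq_zero_of_not_mem hM, Nat.cast_zero, sub_zero, Nat.cast_ne_zero]
    exact (List.count_pos_iff.mpr hL).ne'
  refine measure_mono_null ?_
    (hX.measure_sum_mul_eq_zero_inter_null (c := fun i => (L.count i : ℝ) - M.count i) hXm
      (List.mem_toFinset.mpr (List.mem_append_left M hL)) hc hQ hatom)
  rintro ω ⟨hsum, hQω⟩
  exact ⟨by rw [← List.sum_map_sub_sum_map_eq_sum_count_mul, hsum, sub_self], hQω⟩

lemma ProbabilityTheory.iIndepFun.ae_forall_sum_map_eq_imp_notMem [Countable ι]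
    {X : ι → Ω → ℝ} (hX : iIndepFun X P) (hXm : ∀ i, Measurable (X i))
    (hQ : MeasurableSet Q) (hatom : ∀ i, ∀ q ∈ Q, P (X i ⁻¹' {q}) = 0) :
    ∀ᵐ ω ∂P, ∀ (L M : List ι) (i : ι), i ∈ L → i ∉ M →
      (L.map (X · ω)).sum = (M.map (X · ω)).sum → X i ω ∉ Q := by
  classical
  simp only [ae_all_iff]
  intro L M i hL hM
  filter_upwards [measure_eq_zero_iff_ae_notMem.mp
    (hX.measure_sum_map_eq_inter_null hXm hL hM hQ (hatom i))] with ω hω hsum hQω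
  exact hω ⟨hsum, hQω⟩

end Independence

namespace IsIIDProduct

variable {μ : Measure ℝ} {P : Measure (Edge → ℝ)}

lemma measure_eval_preimage (hP : IsIIDProduct μ P) (e : Edge) {B : Set ℝ}
    (hB : MeasurableSet B) : P ((fun ω => ω e) ⁻¹' B) = μ B := by
  simpa [Set.preimage] using hP.2 {e} (fun _ => B) (by simpa using hB)

lemma iIndepFun_eval (hP : IsIIDProduct μ P) : iIndepFun (fun e (ω : Edge → ℝ) => ω e) P := by
  refine iIndepFun_iff_measure_inter_preimage_eq_mul.mpr fun S B hB => ?_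
  rw [Finset.prod_congr rfl fun e he => hP.measure_eval_preimage e (hB e he), ← hP.2 S B hB]
  congr 1
  ext ω
  simp

end IsIIDProduct

theorem geodesics_share_Q_edges_general
    (μ : Measure ℝ)
    (Q : Set ℝ) (hQmeas : MeasurableSet Q)
    (hQatomless : ∀ q ∈ Q, μ {q} = 0)
    (P : Measure (Edge → ℝ)) (hP : IsIIDProduct μ P) :
    ∀ᵐ ω ∂P, ∀ (x y : Site) (p q : List Site),
      IsGeodesic ω x y p → IsGeodesic ω x y q →
        ∀ e : Edge, ω e ∈ Q → (e ∈ pathEdges p ↔ e ∈ pathEdges q) := by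
  have := hP.1
  have hatom : ∀ e, ∀ q ∈ Q, P ((fun ω : Edge → ℝ => ω e) ⁻¹' {q}) = 0 := fun e q hq => by
    rw [hP.measure_eval_preimage e (measurableSet_singleton q), hQatomless q hq]
  filter_upwards [hP.iIndepFun_eval.ae_forall_sum_map_eq_imp_notMem
    (fun e => measurable_pi_apply e) hQmeas hatom] with ω hω x y p q hp hq e he
  have htime : pathTime ω p = pathTime ω q := hp.2.trans hq.2.symm
  constructor <;> intro hmem <;> by_contra hnot
  exacts [hω _ _ e hmem hnot htime he, hω _ _ e hmem hnot htime.symm he]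

/-- If `Q ⊆ (0,∞)` is Borel and carries no atoms of `μ ∈ ℳ`, then ℙ-a.s.
any two geodesics between the same pair of sites traverse exactly the same set of edges
whose passage time lies in `Q`. -/
theorem geodesics_share_Q_edges
    (μ : Measure ℝ) (hμ : MemM μ)
    (Q : Set ℝ) (hQmeas : MeasurableSet Q) (hQsub : Q ⊆ Set.Ioi 0)
    (hQatomless : ∀ q ∈ Q, μ {q} = 0)
    (P : Measure (Edge → ℝ)) (hP : IsIIDProduct μ P) :
    ∀ᵐ ω ∂P, ∀ (x y : Site) (p q : List Site),
      IsGeodesic ω x y p → IsGeodesic ω x y q →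
        ∀ e : Edge, ω e ∈ Q → (e ∈ pathEdges p ↔ e ∈ pathEdges q) :=
  geodesics_share_Q_edges_general μ Q hQmeas hQatomless P hP
end

section
/- Let τ : 𝔼 → [0,∞) be a fixed configuration of edge weights on ℤ² such that every pair of vertices is joined by at least one geodesic. Let (x_i)_{i∈ℕ} be a sequence of distinct vertices of ℤ² with τ(x_i, x_j) > 0 for all i ≠ j. For a set F ⊆ ℕ and i ∈ F, let C_i^F = {y ∈ ℤ² : τ(y, x_i) < τ(y, x_j) for all j ∈ F, j ≠ i}. If for every finite set F ⊆ ℕ and every i ∈ F the set C_i^F is infinite, then for every i ∈ ℕ the set C_i^ℕ = {y ∈ ℤ² : τ(y, x_i) < τ(y, x_j) for all j ≠ i} is infinite. -/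
/-!
Winning is inherited along geodesics: if `y` is strictly closer to `a` than to `b`, then so is
every site `z` of a geodesic from `y` to `a`, because `τ(y, z) + τ(z, a) = τ(y, a)` while
`τ(y, b) ≤ τ(y, z) + τ(z, b)`. So an infinite colonized set contains, with each of its sites, a
lattice path to the source, and it meets every ℓ¹-sphere around the source. The sets
`C_i^{F_n}` with `F_n = {0, …, n-1} ∪ {i}` decrease in `n` and each meets the finite sphere of
radius `R`, hence so does their intersection `C_i^ℕ`; meeting every sphere, `C_i^ℕ` is infinite.
-/

open MeasureTheory
open scoped Pointwise

theorem List.IsChain.exists_mem_apply_eq {α : Type*} {r : α → α → Prop} {f : α → ℕ}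
    (hf : ∀ u v, r u v → f u ≤ f v + 1) {l : List α} (hl : l.IsChain r) {a b : α}
    (ha : l.head? = some a) (hb : l.getLast? = some b) {n : ℕ} (hbn : f b ≤ n) (hna : n ≤ f a) :
    ∃ z ∈ l, f z = n := by
  induction l generalizing a with
  | nil => simp at ha
  | cons u l ih =>
    obtain rfl : u = a := by simpa using ha
    rcases hna.eq_or_lt with rfl | hlt
    · exact ⟨u, List.mem_cons_self, rfl⟩
    cases l with
    | nil =>
      obtain rfl : u = b := by simpa using hb
      omega
    | cons v l =>
      have huv := hf u v (List.isChain_cons_cons.1 hl).1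
      obtain ⟨z, hz, rfl⟩ := ih hl.tail rfl (by simpa using hb) (by omega)
      exact ⟨z, List.mem_cons_of_mem u hz, rfl⟩

theorem exists_mem_forall_mem_of_antitone {α : Type*} {C : ℕ → Set α} (hC : Antitone C)
    {S : Set α} (hS : S.Finite) (h : ∀ n, (S ∩ C n).Nonempty) : ∃ y ∈ S, ∀ n, y ∈ C n := by
  by_contra! hS_escape
  choose! N hN using hS_escape
  obtain ⟨y, hyS, hyC⟩ := h (hS.toFinset.sup N)
  exact hN y hyS (hC (Finset.le_sup (hS.mem_toFinset.2 hyS)) hyC)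

theorem isPath_iff {x y : Site} {p : List Site} :
    IsPath x y p ↔ p.IsChain SiteAdj ∧ p.head? = some x ∧ p.getLast? = some y :=
  Iff.rfl

theorem isPath_append_cons {x y z : Site} {l₁ l₂ : List Site} :
    IsPath x y (l₁ ++ z :: l₂) ↔ IsPath x z (l₁ ++ [z]) ∧ IsPath z y (z :: l₂) := by
  have hhead : (l₁ ++ z :: l₂).head? = (l₁ ++ [z]).head? := by cases l₁ <;> rfl
  simp only [isPath_iff, hhead, List.getLast?_append_cons, List.head?_cons]
  rw [List.isChain_split]
  tauto

theorem pathEdges_append_cons (l₁ : List Site) (z : Site) (l₂ : List Site) :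
    pathEdges (l₁ ++ z :: l₂) = pathEdges (l₁ ++ [z]) ++ pathEdges (z :: l₂) := by
  induction l₁ with
  | nil => rfl
  | cons a l ih =>
    cases l with
    | nil => rfl
    | cons b l =>
      simp only [List.cons_append] at ih ⊢
      exact congrArg (siteEdge a b :: ·) ih

theorem pathTime_append_cons (ω : Edge → ℝ) (l₁ : List Site) (z : Site) (l₂ : List Site) :
    pathTime ω (l₁ ++ z :: l₂) = pathTime ω (l₁ ++ [z]) + pathTime ω (z :: l₂) := by
  rw [pathTime, pathEdges_append_cons, List.map_append, List.sum_append]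
  rfl

section PassageTime

variable {ω : Edge → ℝ}

theorem pathTime_nonneg (hω : ∀ e, 0 ≤ ω e) (p : List Site) : 0 ≤ pathTime ω p :=
  List.sum_nonneg fun _ h => by obtain ⟨e, -, rfl⟩ := List.mem_map.1 h; exact hω e

theorem T_le_pathTime (hω : ∀ e, 0 ≤ ω e) {x y : Site} {p : List Site} (hp : IsPath x y p) :
    T ω x y ≤ pathTime ω p :=
  csInf_le ⟨0, by rintro _ ⟨q, -, rfl⟩; exact pathTime_nonneg hω q⟩ ⟨p, hp, rfl⟩

theorem T_add_T_le_pathTime (hω : ∀ e, 0 ≤ ω e) {x y z : Site} {p : List Site}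
    (hp : IsPath x y p) (hz : z ∈ p) : T ω x z + T ω z y ≤ pathTime ω p := by
  obtain ⟨l₁, l₂, rfl⟩ := List.append_of_mem hz
  obtain ⟨h₁, h₂⟩ := isPath_append_cons.1 hp
  rw [pathTime_append_cons]
  exact add_le_add (T_le_pathTime hω h₁) (T_le_pathTime hω h₂)

theorem T_le_T_add_T (hω : ∀ e, 0 ≤ ω e) (hgeo : ∀ x y : Site, ∃ p, IsGeodesic ω x y p)
    (x y z : Site) : T ω x z ≤ T ω x y + T ω y z := by
  obtain ⟨p, hp, hpt⟩ := hgeo x y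
  obtain ⟨q, hq, hqt⟩ := hgeo y z
  obtain ⟨l₁, rfl⟩ := List.getLast?_eq_some_iff.1 hp.2.2
  obtain ⟨l₂, rfl⟩ := List.head?_eq_some_iff.1 hq.2.1
  calc T ω x z ≤ pathTime ω (l₁ ++ y :: l₂) := T_le_pathTime hω (isPath_append_cons.2 ⟨hp, hq⟩)
    _ = T ω x y + T ω y z := by rw [pathTime_append_cons, hpt, hqt]

theorem T_lt_T_of_mem_geodesic (hω : ∀ e, 0 ≤ ω e)
    (hgeo : ∀ x y : Site, ∃ p, IsGeodesic ω x y p) {a b y z : Site} {p : List Site}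
    (hp : IsGeodesic ω y a p) (hz : z ∈ p) (h : T ω y a < T ω y b) : T ω z a < T ω z b := by
  have hsplit := T_add_T_le_pathTime hω hp.1 hz
  have htri := T_le_T_add_T hω hgeo y z b
  rw [hp.2] at hsplit
  linarith

end PassageTime

def l1dist (u v : Site) : ℕ := (u.1 - v.1).natAbs + (u.2 - v.2).natAbs

theorem l1dist_self (u : Site) : l1dist u u = 0 := by simp [l1dist]

theorem l1dist_le_add_one_of_siteAdj (c : Site) {u v : Site} (h : SiteAdj u v) :
    l1dist c u ≤ l1dist c v + 1 := by
  rw [SiteAdj, Int.abs_eq_natAbs, Int.abs_eq_natAbs] at h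
  unfold l1dist
  omega

theorem finite_setOf_l1dist_le (c : Site) (n : ℕ) : {v | l1dist c v ≤ n}.Finite :=
  (Set.finite_Icc (c.1 - n, c.2 - n) (c.1 + n, c.2 + n)).subset fun v hv => by
    have hv : l1dist c v ≤ n := hv
    simp only [l1dist] at hv
    simp only [Set.mem_Icc, Prod.le_def]
    omega

theorem Set.Infinite.exists_l1dist_eq {S : Set Site} (hS : S.Infinite) {a : Site}
    (hpath : ∀ y ∈ S, ∃ p, IsPath y a p ∧ ∀ z ∈ p, z ∈ S) (n : ℕ) :
    ∃ z ∈ S, l1dist a z = n := by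
  obtain ⟨y, hyS, hyn⟩ : ∃ y ∈ S, n ≤ l1dist a y := by
    by_contra! h
    exact hS ((finite_setOf_l1dist_le a n).subset fun y hy => (h y hy).le)
  obtain ⟨p, hp, hpS⟩ := hpath y hyS
  obtain ⟨hchain, hhead, hlast⟩ := isPath_iff.1 hp
  obtain ⟨z, hz, hzn⟩ := hchain.exists_mem_apply_eq (f := l1dist a)
    (fun _ _ => l1dist_le_add_one_of_siteAdj a) hhead hlast (by simp [l1dist_self]) hyn
  exact ⟨z, hpS z hz, hzn⟩

theorem Set.infinite_of_forall_exists_l1dist_eq {S : Set Site} {a : Site}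
    (h : ∀ n : ℕ, ∃ z ∈ S, l1dist a z = n) : S.Infinite := fun hS => by
  obtain ⟨M, hM⟩ := (hS.image (l1dist a)).bddAbove
  obtain ⟨z, hz, hzM⟩ := h (M + 1)
  have := hM ⟨z, hz, hzM⟩
  omega

theorem finite_coexistence_implies_infinite_coexistence_general
    (τ : Edge → ℝ) (hτ : ∀ e, 0 ≤ τ e)
    (hgeo : ∀ x y : Site, ∃ p : List Site, IsGeodesic τ x y p)
    (x : ℕ → Site)
    (hfin : ∀ F : Finset ℕ, ∀ i ∈ F,
      {y : Site | ∀ j ∈ F, j ≠ i → T τ y (x i) < T τ y (x j)}.Infinite) :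
    ∀ i : ℕ, {y : Site | ∀ j : ℕ, j ≠ i → T τ y (x i) < T τ y (x j)}.Infinite := by
  intro i
  let C (n : ℕ) : Set Site := {y | ∀ j ∈ Finset.range n, j ≠ i → T τ y (x i) < T τ y (x j)}
  have hC_infinite (n : ℕ) : (C n).Infinite := by
    refine (hfin (insert i (Finset.range n)) i (Finset.mem_insert_self _ _)).mono ?_
    exact fun y hy j hj => hy j (Finset.mem_insert_of_mem hj)
  have hC_antitone : Antitone C := fun m n hmn y hy j hj => hy j (Finset.range_mono hmn hj)
  have hC_geodesic (n : ℕ) : ∀ y ∈ C n, ∃ p, IsPath y (x i) p ∧ ∀ z ∈ p, z ∈ C n := by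
    intro y hy
    obtain ⟨p, hp⟩ := hgeo y (x i)
    exact ⟨p, hp.1, fun z hz j hj hji => T_lt_T_of_mem_geodesic hτ hgeo hp hz (hy j hj hji)⟩
  refine Set.infinite_of_forall_exists_l1dist_eq (a := x i) fun n => ?_
  obtain ⟨y, hyn, hyC⟩ := exists_mem_forall_mem_of_antitone hC_antitone
    ((finite_setOf_l1dist_le (x i) n).subset fun y hy => hy.le) fun m =>
      ((hC_infinite m).exists_l1dist_eq (hC_geodesic m) n).imp fun z hz => ⟨hz.2, hz.1⟩
  exact ⟨y, fun j hji => hyC (j + 1) j (Finset.self_mem_range_succ j) hji, hyn⟩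

/-- In a fixed configuration of nonnegative edge weights in which
geodesics exist, if every finite subfamily of the (distinct, pairwise positively-separated)
sources `(x i)` coexists — each finitely-competing colonized set `C i^F` is infinite — then
all the species coexist simultaneously: each `C i^ℕ` is infinite. -/
theorem finite_coexistence_implies_infinite_coexistence
    (τ : Edge → ℝ) (hτ : ∀ e, 0 ≤ τ e)
    (hgeo : ∀ x y : Site, ∃ p : List Site, IsGeodesic τ x y p)
    (x : ℕ → Site) (hinj : Function.Injective x)
    (hpos : ∀ i j : ℕ, i ≠ j → 0 < T τ (x i) (x j))
    (hfin : ∀ F : Finset ℕ, ∀ i ∈ F,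
      {y : Site | ∀ j ∈ F, j ≠ i → T τ y (x i) < T τ y (x j)}.Infinite) :
    ∀ i : ℕ, {y : Site | ∀ j : ℕ, j ≠ i → T τ y (x i) < T τ y (x j)}.Infinite :=
  finite_coexistence_implies_infinite_coexistence_general τ hτ hgeo x hfin
end
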